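/- Let r ≥ 3 and 2 ≤ t ≤ r, and suppose there is an (r-1)-shadow-homomorphism from H^r_{t+1} to H^r_t with edge map f : E(H^r_{t+1}) → E(H^r_t). Then f is injective; since |E(H^r_{t+1})| = t + 1 > t = |E(H^r_t)|, this is a contradiction. -/
import Mathlib


/-- Shadow-homomorphism data: see the paper's definition of `k`-shadow-homomorphisms. -/
def ShadowHomData {α β : Type*} [DecidableEq β] (k : ℕ)
    (GE : Finset (Finset α)) (FE : Finset (Finset β))
    (f : Finset α → Finset β) (g : Finset α → α → β)
    (fE : Finset α → Finset β) (gE : Finset α → α → β) : Prop :=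
  (∀ S : Finset α, (∃ e ∈ GE, S ⊆ e ∧ S.card = k) →
      (∃ e' ∈ FE, f S ⊆ e' ∧ (f S).card = k) ∧ S.image (g S) = f S) ∧
  ∀ E ∈ GE, fE E ∈ FE ∧ E.image (gE E) = fE E ∧
      ∀ S ⊆ E, S.card = k → ∀ v ∈ S, gE E v = g S v

/-- The edge set of `H^r_t`, the `r`-graph on `r+1` vertices with `t` edges. -/
def Hedges (r t : ℕ) : Finset (Finset (Fin (r + 1))) :=
  (Finset.univ.filter (fun i : Fin (r + 1) => (i : ℕ) < t)).image
    (fun i => Finset.univ.erase i)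

open Finset

lemma mem_Hedges {r s : ℕ} {E : Finset (Fin (r + 1))} :
    E ∈ Hedges r s ↔ ∃ i : Fin (r + 1), (i : ℕ) < s ∧ Finset.univ.erase i = E := by
  simp [Hedges]

lemma erase_injective_univ {n : ℕ} : Function.Injective
    (fun i : Fin (n + 1) => (Finset.univ : Finset (Fin (n + 1))).erase i) := by
  intro i j hij
  by_contra hne
  have hij' : (Finset.univ : Finset (Fin (n + 1))).erase i = Finset.univ.erase j := hij
  have hi : i ∈ (Finset.univ : Finset (Fin (n + 1))).erase j :=
    Finset.mem_erase.2 ⟨hne, Finset.mem_univ i⟩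
  rw [← hij'] at hi
  exact (Finset.notMem_erase i _) hi

lemma card_Hedges {r s : ℕ} (hs : s ≤ r + 1) : (Hedges r s).card = s := by
  rw [Hedges, Finset.card_image_of_injective _ erase_injective_univ]
  apply Finset.card_eq_of_bijective (fun k hk => (⟨k, by omega⟩ : Fin (r + 1)))
  · intro a ha
    simp only [Finset.mem_filter, Finset.mem_univ, true_and] at ha
    exact ⟨a, ha, by simp⟩
  · intro k hk
    simp [hk]
  · intro k k' hk hk' hkk'
    simpa [Fin.ext_iff] using hkk'

/-- For `r ≥ 3` and `2 ≤ t ≤ r`, the edge map of any `(r-1)`-shadow-homomorphism from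
`H^r_{t+1}` to `H^r_t` is injective on the edge set; since `H^r_{t+1}` has `t+1 > t`
edges, this is a contradiction (`False`). -/
theorem stmt_16 (r t : ℕ) (hr : 3 ≤ r) (ht : 2 ≤ t) (htr : t ≤ r)
    (f : Finset (Fin (r + 1)) → Finset (Fin (r + 1)))
    (g : Finset (Fin (r + 1)) → Fin (r + 1) → Fin (r + 1))
    (fE : Finset (Fin (r + 1)) → Finset (Fin (r + 1)))
    (gE : Finset (Fin (r + 1)) → Fin (r + 1) → Fin (r + 1))
    (h : ShadowHomData (r - 1) (Hedges r (t + 1)) (Hedges r t) f g fE gE) :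
    Set.InjOn fE ↑(Hedges r (t + 1)) ∧ False := by
  obtain ⟨hS, hE⟩ := h
  set Ed : Fin (r + 1) → Finset (Fin (r + 1)) :=
    fun a => (Finset.univ : Finset (Fin (r + 1))).erase a with hEd
  have hedge : ∀ x : Fin (r + 1), (x : ℕ) < t + 1 → Ed x ∈ Hedges r (t + 1) :=
    fun x hx => mem_Hedges.2 ⟨x, hx, rfl⟩
  have hcard_edge : ∀ x : Fin (r + 1), (Ed x).card = r := by
    intro x
    simp [hEd, Finset.card_erase_of_mem]
  have hmem_edge : ∀ x y : Fin (r + 1), x ≠ y → x ∈ Ed y := by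
    intro x y hxy; exact Finset.mem_erase.2 ⟨hxy, Finset.mem_univ x⟩
  -- injectivity of gE on each edge
  have hinj : ∀ x : Fin (r + 1), (x : ℕ) < t + 1 → Set.InjOn (gE (Ed x)) (Ed x) := by
    intro x hx
    obtain ⟨h1, h2, _⟩ := hE _ (hedge x hx)
    obtain ⟨i, _, hi⟩ := mem_Hedges.1 h1
    have hc : ((Ed x).image (gE (Ed x))).card = (Ed x).card := by
      rw [h2, ← hi, hcard_edge, hcard_edge]
    exact Finset.card_image_iff.1 hc
  -- intersections
  have hinter : ∀ x y : Fin (r + 1), x ≠ y → Ed x ∩ Ed y = (Ed x).erase y := by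
    intro x y hxy
    ext z
    simp only [hEd, Finset.mem_inter, Finset.mem_erase, Finset.mem_univ, and_true]
    tauto
  have hinter_card : ∀ x y : Fin (r + 1), x ≠ y → (Ed x ∩ Ed y).card = r - 1 := by
    intro x y hxy
    rw [hinter x y hxy, Finset.card_erase_of_mem (hmem_edge y x hxy.symm), hcard_edge]
  -- compatibility of gE with g on intersections
  have hcompat : ∀ x y : Fin (r + 1), (x : ℕ) < t + 1 → x ≠ y →
      ∀ v ∈ Ed x ∩ Ed y, gE (Ed x) v = g (Ed x ∩ Ed y) v := by
    intro x y hx hxy v hv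
    exact (hE _ (hedge x hx)).2.2 _ Finset.inter_subset_left (hinter_card x y hxy) v hv
  -- key step
  have key : ∀ a b : Fin (r + 1), (a : ℕ) < t + 1 → (b : ℕ) < t + 1 → a ≠ b →
      fE (Ed a) ≠ fE (Ed b) := by
    intro a b ha hb hab heq
    -- a third index
    obtain ⟨c, hc, hca, hcb⟩ : ∃ c : Fin (r + 1), (c : ℕ) < t + 1 ∧ c ≠ a ∧ c ≠ b := by
      have hab' : (a : ℕ) ≠ (b : ℕ) := fun hh => hab (Fin.ext hh)
      obtain ⟨m, hm3, hma, hmb⟩ : ∃ m : ℕ, m < 3 ∧ m ≠ (a : ℕ) ∧ m ≠ (b : ℕ) := by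
        by_cases h0 : (a : ℕ) ≠ 0 ∧ (b : ℕ) ≠ 0
        · exact ⟨0, by omega, by omega, by omega⟩
        · by_cases h1 : (a : ℕ) ≠ 1 ∧ (b : ℕ) ≠ 1
          · exact ⟨1, by omega, by omega, by omega⟩
          · exact ⟨2, by omega, by omega, by omega⟩
      refine ⟨⟨m, by omega⟩, ?_, ?_, ?_⟩
      · show m < t + 1; omega
      · exact fun hh => hma (congrArg Fin.val hh)
      · exact fun hh => hmb (congrArg Fin.val hh)
    -- gE agrees on intersections
    have hagree : ∀ x y : Fin (r + 1), (x : ℕ) < t + 1 → (y : ℕ) < t + 1 → x ≠ y →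
        ∀ v ∈ Ed x ∩ Ed y, gE (Ed x) v = gE (Ed y) v := by
      intro x y hx hy hxy v hv
      rw [hcompat x y hx hxy v hv]
      have hv' : v ∈ Ed y ∩ Ed x := by rwa [Finset.inter_comm]
      rw [hcompat y x hy hxy.symm v hv', Finset.inter_comm]
    -- show gE (Ed a) b = gE (Ed b) a
    have hbS : b ∉ Ed a ∩ Ed b := by
      rw [hinter a b hab]; exact Finset.notMem_erase b _
    have haS : a ∉ Ed a ∩ Ed b := by
      rw [Finset.inter_comm, hinter b a hab.symm]; exact Finset.notMem_erase a _
    have hEa : Ed a = insert b (Ed a ∩ Ed b) := by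
      ext z
      simp only [hEd, Finset.mem_insert, Finset.mem_inter, Finset.mem_erase, Finset.mem_univ,
        and_true]
      constructor
      · intro hz
        by_cases hzb : z = b
        · exact Or.inl hzb
        · exact Or.inr ⟨hz, hzb⟩
      · rintro (rfl | ⟨hz, _⟩)
        · exact hab.symm
        · exact hz
    have hEb : Ed b = insert a (Ed a ∩ Ed b) := by
      ext z
      simp only [hEd, Finset.mem_insert, Finset.mem_inter, Finset.mem_erase, Finset.mem_univ,
        and_true]
      constructor
      · intro hz
        by_cases hza : z = a
        · exact Or.inl hza
        · exact Or.inr ⟨hza, hz⟩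
      · rintro (rfl | ⟨_, hz⟩)
        · exact hab
        · exact hz
    have himg : (Ed a ∩ Ed b).image (gE (Ed a)) = (Ed a ∩ Ed b).image (gE (Ed b)) :=
      Finset.image_congr (fun v hv => hagree a b ha hb hab v hv)
    have hA : insert (gE (Ed a) b) ((Ed a ∩ Ed b).image (gE (Ed a))) =
        insert (gE (Ed b) a) ((Ed a ∩ Ed b).image (gE (Ed b))) := by
      rw [← Finset.image_insert, ← Finset.image_insert, ← hEa, ← hEb,
        (hE _ (hedge a ha)).2.1, (hE _ (hedge b hb)).2.1, heq]
    have hnotin : gE (Ed a) b ∉ (Ed a ∩ Ed b).image (gE (Ed a)) := by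
      intro hmem
      obtain ⟨v, hv, hveq⟩ := Finset.mem_image.1 hmem
      have : v = b := hinj a ha (Finset.mem_of_mem_inter_left hv)
        (hmem_edge b a hab.symm) hveq
      exact hbS (this ▸ hv)
    have hxy : gE (Ed a) b = gE (Ed b) a := by
      have : gE (Ed a) b ∈ insert (gE (Ed b) a) ((Ed a ∩ Ed b).image (gE (Ed b))) := by
        rw [← hA]; exact Finset.mem_insert_self _ _
      rcases Finset.mem_insert.1 this with h' | h'
      · exact h'
      · exact absurd (himg ▸ h') hnotin
    -- now use the third edge
    have hb_ca : b ∈ Ed c ∩ Ed a :=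
      Finset.mem_inter.2 ⟨hmem_edge b c (fun hh => hcb hh.symm), hmem_edge b a hab.symm⟩
    have ha_cb : a ∈ Ed c ∩ Ed b :=
      Finset.mem_inter.2 ⟨hmem_edge a c (fun hh => hca hh.symm), hmem_edge a b hab⟩
    have e1 : gE (Ed c) b = gE (Ed a) b := hagree c a hc ha hca b hb_ca
    have e2 : gE (Ed c) a = gE (Ed b) a := hagree c b hc hb hcb a ha_cb
    have : a = b := hinj c hc (hmem_edge a c (fun hh => hca hh.symm))
      (hmem_edge b c (fun hh => hcb hh.symm)) (by rw [e2, e1, hxy])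
    exact hab this
  have hinjOn : Set.InjOn fE ↑(Hedges r (t + 1)) := by
    intro X hX Y hY hXY
    obtain ⟨i, hi, hiX⟩ := mem_Hedges.1 (Finset.mem_coe.1 hX)
    obtain ⟨j, hj, hjY⟩ := mem_Hedges.1 (Finset.mem_coe.1 hY)
    by_cases hij : i = j
    · rw [← hiX, ← hjY, hij]
    · exfalso
      apply key i j hi hj hij
      show fE (Finset.univ.erase i) = fE (Finset.univ.erase j)
      rw [hiX, hjY]; exact hXY
  refine ⟨hinjOn, ?_⟩
  have hmaps : ∀ X ∈ Hedges r (t + 1), fE X ∈ Hedges r t := fun X hX => (hE X hX).1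
  have hle : (Hedges r (t + 1)).card ≤ (Hedges r t).card :=
    Finset.card_le_card_of_injOn fE hmaps hinjOn
  rw [card_Hedges (by omega), card_Hedges (by omega)] at hle
  omega
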